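/- Let p_A be a probability distribution on a set of l×n matrices over the finite field F_q such that p_A({A : Au = 0}) depends on u only through its type t(u). Let α(n) := |Im A| max_{t∈Ĥ} p_{A,t} and β(n) := Σ_{t∈H\Ĥ} |C_t| p_{A,t}, where p_{A,t} := p_A({A : Au = 0}) for any u of type t, C_t := {u : t(u) = t}, H is the set of all nonzero types and Ĥ ⊆ H. Then for any subsets T, T' of F_q^n: Σ_{u∈T, u'∈T'} p_A({A : Au = Au'}) ≤ |T∩T'| + |T||T'|α(n)/|Im A| + min{|T|,|T'|}β(n). -/

import Mathlib

/-!
Since `A u = A u'` iff `A (u - u') = 0`, the double sum is `∑_{u ∈ T, u' ∈ T'} f (u - u')` with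
`f v = p_A{A v = 0}`. For fixed `u`, the differences `u - u'` are distinct: the one equal to `0`
contributes at most `1`, those in `Ĥ` at most `max_Ĥ f` each, and the remaining nonzero ones at most
`β` in total. Summing over `u ∈ T` gives the bound with `|T| β`; as `f (-v) = f v`, the roles of `T`
and `T'` may be swapped, which gives `min {|T|, |T'|} β`.
-/

open scoped Classical BigOperators

/-- The type (count of occurrences of each symbol) of a vector. -/
def vecType {F : Type} [DecidableEq F] {n : ℕ} (u : Fin n → F) : F → ℕ :=
  fun a => (Finset.univ.filter (fun i => u i = a)).card

/-- Probability that a random matrix from the ensemble annihilates u. -/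
noncomputable def pZero {F : Type} [Field F] [Fintype F] [DecidableEq F]
    {l n : ℕ} (𝒜 : Finset (Matrix (Fin l) (Fin n) F))
    (p : Matrix (Fin l) (Fin n) F → ℝ) (u : Fin n → F) : ℝ :=
  ∑ A ∈ 𝒜.filter (fun A => A.mulVec u = 0), p A

open Finset
open scoped Matrix

section DifferenceSums

variable {G : Type*} [AddCommGroup G] [Fintype G] [DecidableEq G] (f : G → ℝ) (H : Finset G) {M : ℝ}

theorem sum_le_indicator_zero_add_card_mul_add_sum_compl
    (hf0 : ∀ v, 0 ≤ f v) (hf1 : f 0 ≤ 1) (hM : ∀ v ∈ H, f v ≤ M) (D : Finset G) :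
    ∑ v ∈ D, f v ≤ (if (0 : G) ∈ D then 1 else 0) + (#(D.filter (· ∈ H)) : ℝ) * M
      + ∑ v ∈ univ.filter (fun v : G => v ≠ 0 ∧ v ∉ H), f v := by
  rw [← sum_filter_add_sum_filter_not D (· ∈ H),
    ← sum_filter_add_sum_filter_not (D.filter (· ∉ H)) (· = (0 : G))]
  have hzero : ∑ v ∈ (D.filter (· ∉ H)).filter (· = (0 : G)), f v
      ≤ if (0 : G) ∈ D then 1 else 0 :=
    calc _ ≤ ∑ v ∈ D.filter (· = (0 : G)), f v :=
          sum_le_sum_of_subset_of_nonneg (filter_subset_filter _ (filter_subset _ _))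
            fun v _ _ => hf0 v
      _ = if (0 : G) ∈ D then f 0 else 0 := by rw [sum_filter, sum_ite_eq']
      _ ≤ _ := by split_ifs <;> simp [hf1]
  have hH : ∑ v ∈ D.filter (· ∈ H), f v ≤ (#(D.filter (· ∈ H)) : ℝ) * M := by
    simpa using sum_le_card_nsmul _ _ _ fun v hv => hM v (mem_filter.1 hv).2
  have hrest : ∑ v ∈ (D.filter (· ∉ H)).filter (· ≠ (0 : G)), f v
      ≤ ∑ v ∈ univ.filter (fun v : G => v ≠ 0 ∧ v ∉ H), f v :=
    sum_le_sum_of_subset_of_nonneg (fun v hv => by simp_all) fun v _ _ => hf0 v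
  linarith

variable {f H}

theorem sum_sub_le (hf0 : ∀ v, 0 ≤ f v) (hf1 : f 0 ≤ 1) (hM : ∀ v ∈ H, f v ≤ M) (hM0 : 0 ≤ M)
    (u : G) (S : Finset G) :
    ∑ u' ∈ S, f (u - u') ≤ (if u ∈ S then 1 else 0) + (#S : ℝ) * M
      + ∑ v ∈ univ.filter (fun v : G => v ≠ 0 ∧ v ∉ H), f v := by
  have hinj : Set.InjOn (u - ·) S := (sub_right_injective (b := u)).injOn
  have hzero : ((0 : G) ∈ S.image (u - ·)) ↔ u ∈ S := by simp [sub_eq_zero]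
  have hcard : (#((S.image (u - ·)).filter (· ∈ H)) : ℝ) ≤ #S := by
    exact_mod_cast (card_filter_le _ _).trans card_image_le
  rw [← sum_image hinj]
  calc _ ≤ _ := sum_le_indicator_zero_add_card_mul_add_sum_compl f H hf0 hf1 hM _
    _ ≤ _ := by
      rw [if_congr hzero rfl rfl]
      gcongr

theorem sum_sum_sub_le (hf0 : ∀ v, 0 ≤ f v) (hf1 : f 0 ≤ 1) (hM : ∀ v ∈ H, f v ≤ M)
    (hM0 : 0 ≤ M) (T T' : Finset G) :
    ∑ u ∈ T, ∑ u' ∈ T', f (u - u') ≤ (#(T ∩ T') : ℝ) + #T * #T' * M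
      + #T * ∑ v ∈ univ.filter (fun v : G => v ≠ 0 ∧ v ∉ H), f v := by
  calc _ ≤ ∑ u ∈ T, ((if u ∈ T' then 1 else 0) + (#T' : ℝ) * M
        + ∑ v ∈ univ.filter (fun v : G => v ≠ 0 ∧ v ∉ H), f v) :=
        sum_le_sum fun u _ => sum_sub_le hf0 hf1 hM hM0 u T'
    _ = _ := by
      simp [sum_add_distrib, sum_ite_mem, mul_assoc]

theorem sum_sum_sub_le_min (hf0 : ∀ v, 0 ≤ f v) (hf1 : f 0 ≤ 1) (hM : ∀ v ∈ H, f v ≤ M)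
    (hM0 : 0 ≤ M) (hf_neg : ∀ v, f (-v) = f v) (T T' : Finset G) :
    ∑ u ∈ T, ∑ u' ∈ T', f (u - u') ≤ (#(T ∩ T') : ℝ) + #T * #T' * M
      + (min #T #T' : ℕ) * ∑ v ∈ univ.filter (fun v : G => v ≠ 0 ∧ v ∉ H), f v := by
  rcases le_total #T #T' with h | h
  · rw [min_eq_left h]
    exact sum_sum_sub_le hf0 hf1 hM hM0 T T'
  · have hswap : ∑ u ∈ T, ∑ u' ∈ T', f (u - u') = ∑ u' ∈ T', ∑ u ∈ T, f (u' - u) := by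
      rw [sum_comm]
      exact sum_congr rfl fun u' _ => sum_congr rfl fun u _ => by rw [← hf_neg, neg_sub]
    rw [min_eq_right h, hswap, inter_comm, mul_comm (#T : ℝ)]
    exact sum_sum_sub_le hf0 hf1 hM hM0 T' T

end DifferenceSums

section MatrixEnsemble

variable {F : Type} [Field F] [Fintype F] [DecidableEq F] {l n : ℕ}
  (𝒜 : Finset (Matrix (Fin l) (Fin n) F)) {p : Matrix (Fin l) (Fin n) F → ℝ}

theorem sum_filter_mulVec_eq_mulVec (p : Matrix (Fin l) (Fin n) F → ℝ) (u u' : Fin n → F) :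
    ∑ A ∈ 𝒜.filter (fun A => A *ᵥ u = A *ᵥ u'), p A = pZero 𝒜 p (u - u') := by
  simp only [pZero, Matrix.mulVec_sub, sub_eq_zero]

theorem pZero_neg (p : Matrix (Fin l) (Fin n) F → ℝ) (v : Fin n → F) :
    pZero 𝒜 p (-v) = pZero 𝒜 p v := by
  simp only [pZero, Matrix.mulVec_neg, neg_eq_zero]

theorem pZero_nonneg (hp0 : ∀ A, 0 ≤ p A) (v : Fin n → F) : 0 ≤ pZero 𝒜 p v :=
  sum_nonneg fun A _ => hp0 A

theorem pZero_le_one (hp0 : ∀ A, 0 ≤ p A) (hp1 : ∑ A ∈ 𝒜, p A = 1) (v : Fin n → F) :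
    pZero 𝒜 p v ≤ 1 :=
  hp1 ▸ sum_le_sum_of_subset_of_nonneg (filter_subset _ _) fun A _ _ => hp0 A

theorem card_biUnion_image_mulVec_pos (h𝒜 : 𝒜.Nonempty) :
    0 < #(𝒜.biUnion fun A => univ.image A.mulVec) := by
  obtain ⟨A, hA⟩ := h𝒜
  exact card_pos.2 ⟨A *ᵥ 0, mem_biUnion.2 ⟨A, hA, mem_image_of_mem _ (mem_univ _)⟩⟩

end MatrixEnsemble

/-- `β` sums over vectors, so it equals `Σ_{t ∈ H \ Ĥ} |C_t| p_{A,t}` when `Ĥ` is a union of type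
classes `C_t`. -/
theorem matrix_ensemble_hash_property_general
    {F : Type} [Field F] [Fintype F] [DecidableEq F]
    (l n : ℕ)
    (𝒜 : Finset (Matrix (Fin l) (Fin n) F))
    (p : Matrix (Fin l) (Fin n) F → ℝ)
    (hp0 : ∀ A, 0 ≤ p A) (hp1 : ∑ A ∈ 𝒜, p A = 1)
    (Im : Finset (Fin l → F))
    (hIm : Im = 𝒜.biUnion (fun A => Finset.image A.mulVec Finset.univ))
    (Hhat : Finset (Fin n → F))
    (hHhatne : Hhat.Nonempty)
    (α β : ℝ)
    (hα : α = (Im.card : ℝ) * Hhat.sup' hHhatne (pZero 𝒜 p))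
    (hβ : β = ∑ u ∈ Finset.univ.filter
        (fun u : Fin n → F => u ≠ 0 ∧ u ∉ Hhat), pZero 𝒜 p u) :
    ∀ T T' : Finset (Fin n → F),
      (∑ u ∈ T, ∑ u' ∈ T',
        ∑ A ∈ 𝒜.filter (fun A => A.mulVec u = A.mulVec u'), p A)
      ≤ ((T ∩ T').card : ℝ)
        + (T.card : ℝ) * (T'.card : ℝ) * α / (Im.card : ℝ)
        + (min T.card T'.card : ℝ) * β := by
  intro T T'
  have h𝒜 : 𝒜.Nonempty := nonempty_of_sum_ne_zero (hp1 ▸ one_ne_zero)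
  have hIm_pos : (0 : ℝ) < #Im := by
    exact_mod_cast hIm ▸ card_biUnion_image_mulVec_pos 𝒜 h𝒜
  have hM0 : 0 ≤ Hhat.sup' hHhatne (pZero 𝒜 p) :=
    hHhatne.elim fun v hv => (pZero_nonneg 𝒜 hp0 v).trans (le_sup' _ hv)
  rw [hα, hβ, mul_div_assoc, mul_div_cancel_left₀ _ hIm_pos.ne']
  simp only [sum_filter_mulVec_eq_mulVec]
  exact_mod_cast sum_sum_sub_le_min (pZero_nonneg 𝒜 hp0) (pZero_le_one 𝒜 hp0 hp1 0)
    (fun _ hu => le_sup' _ hu) hM0 (pZero_neg 𝒜 p) T T'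

/-- Theorem 1 of the paper: an ensemble of l×n matrices over a finite field
    whose annihilation probability depends only on the type of the vector
    satisfies the (α,β)-hash inequality, where
    α = |Im 𝒜| · max_{t ∈ Hhat} p_{A,t} and β = Σ_{t ∈ H\Hhat} |C_t| p_{A,t}
    (here Hhat is represented as a type-closed set of nonzero vectors, and the
    β-sum over vectors u ≠ 0 with u ∉ Hhat counts each type |C_t| times). -/
theorem matrix_ensemble_hash_property
    {F : Type} [Field F] [Fintype F] [DecidableEq F]
    (l n : ℕ)
    (𝒜 : Finset (Matrix (Fin l) (Fin n) F))
    (p : Matrix (Fin l) (Fin n) F → ℝ)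
    (hp0 : ∀ A, 0 ≤ p A) (hp1 : ∑ A ∈ 𝒜, p A = 1)
    (Im : Finset (Fin l → F))
    (hIm : Im = 𝒜.biUnion (fun A => Finset.image A.mulVec Finset.univ))
    (hdep : ∀ u u' : Fin n → F, vecType u = vecType u' →
      pZero 𝒜 p u = pZero 𝒜 p u')
    (Hhat : Finset (Fin n → F))
    (hHhatne : Hhat.Nonempty)
    (hHhat0 : (0 : Fin n → F) ∉ Hhat)
    (hHhatclosed : ∀ u ∈ Hhat, ∀ u' : Fin n → F, vecType u' = vecType u → u' ∈ Hhat)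
    (α β : ℝ)
    (hα : α = (Im.card : ℝ) * Hhat.sup' hHhatne (pZero 𝒜 p))
    (hβ : β = ∑ u ∈ Finset.univ.filter
        (fun u : Fin n → F => u ≠ 0 ∧ u ∉ Hhat), pZero 𝒜 p u) :
    ∀ T T' : Finset (Fin n → F),
      (∑ u ∈ T, ∑ u' ∈ T',
        ∑ A ∈ 𝒜.filter (fun A => A.mulVec u = A.mulVec u'), p A)
      ≤ ((T ∩ T').card : ℝ)
        + (T.card : ℝ) * (T'.card : ℝ) * α / (Im.card : ℝ)
        + (min T.card T'.card : ℝ) * β :=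
  matrix_ensemble_hash_property_general l n 𝒜 p hp0 hp1 Im hIm Hhat hHhatne α β hα hβ
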